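/- arXiv:1301.6397 — 2 statements merged into one kernel-verified Lean document; each statement's English description precedes it below -/
import Mathlib

section
/- Define C(x) = (1/2)·log(1+x). For the symmetric Gaussian two-way relay channel with user power P, relay power P_r, uplink noise N_r, downlink noise N, and time fraction α ∈ (0,1), the unique N̂ > 0 satisfying 2α·C(P/(N_r+N̂)) = 2[(1-α)·C(P_r/N) - α·C(N_r/N̂)] is N̂ = (P + N_r)/((1 + P_r/N)^{(1-α)/α} - 1). -/
noncomputable def Cap (x : ℝ) : ℝ := (1 / 2) * Real.log (1 + x)

theorem stmt_3 (P Pr Nr N α : ℝ) (hP : 0 < P) (hPr : 0 < Pr) (hNr : 0 < Nr)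
    (hN : 0 < N) (hα : α ∈ Set.Ioo (0:ℝ) 1) :
    ∀ Nhat : ℝ, 0 < Nhat →
      (2 * α * Cap (P / (Nr + Nhat))
          = 2 * ((1 - α) * Cap (Pr / N) - α * Cap (Nr / Nhat))
        ↔ Nhat = (P + Nr) / ((1 + Pr / N) ^ ((1 - α) / α) - 1)) := by
  obtain ⟨hα0, hα1⟩ := hα
  intro Nhat hNhat
  have hB : (0:ℝ) < Nr + Nhat := by linarith
  have hA : (0:ℝ) < P + Nr + Nhat := by linarith
  have hK0 : (1:ℝ) < 1 + Pr / N := by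
    have : 0 < Pr / N := div_pos hPr hN
    linarith
  have hβ : 0 < (1 - α) / α := div_pos (by linarith) hα0
  set K : ℝ := (1 + Pr / N) ^ ((1 - α) / α) with hKdef
  have hK1 : 1 < K := by
    rw [hKdef]
    exact Real.one_lt_rpow_iff_of_pos (by linarith) |>.mpr (Or.inl ⟨hK0, hβ⟩)
  have h1 : (1 : ℝ) + P / (Nr + Nhat) = (P + Nr + Nhat) / (Nr + Nhat) := by
    field_simp; ring
  have h2 : (1 : ℝ) + Nr / Nhat = (Nr + Nhat) / Nhat := by
    field_simp; ring
  have lA := Real.log_div (ne_of_gt hA) (ne_of_gt hB)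
  have lB := Real.log_div (ne_of_gt hB) (ne_of_gt hNhat)
  -- reduce the equation
  have key : (2 * α * Cap (P / (Nr + Nhat))
      = 2 * ((1 - α) * Cap (Pr / N) - α * Cap (Nr / Nhat)))
      ↔ Real.log ((P + Nr + Nhat) / Nhat) = ((1 - α) / α) * Real.log (1 + Pr / N) := by
    constructor
    · intro h
      rw [Cap, Cap, Cap, h1, h2, lA, lB] at h
      rw [Real.log_div (ne_of_gt hA) (ne_of_gt hNhat)]
      field_simp at h ⊢
      nlinarith [h]
    · intro h
      rw [Cap, Cap, Cap, h1, h2, lA, lB]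
      rw [Real.log_div (ne_of_gt hA) (ne_of_gt hNhat)] at h
      field_simp at h ⊢
      nlinarith [h]
  rw [key]
  have hlogK : Real.log K = ((1 - α) / α) * Real.log (1 + Pr / N) := by
    rw [hKdef, Real.log_rpow (by linarith)]
  rw [← hlogK]
  have hACpos : 0 < (P + Nr + Nhat) / Nhat := div_pos hA hNhat
  have hKpos : (0:ℝ) < K := by linarith
  constructor
  · intro h
    have heq : (P + Nr + Nhat) / Nhat = K := by
      have := congrArg Real.exp h
      rwa [Real.exp_log hACpos, Real.exp_log hKpos] at this
    rw [div_eq_iff (ne_of_gt hNhat)] at heq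
    rw [eq_div_iff (by linarith : K - 1 ≠ 0)]
    linarith [heq]
  · intro h
    have hK1' : K - 1 ≠ 0 := by linarith
    rw [eq_div_iff hK1'] at h
    have heq : (P + Nr + Nhat) / Nhat = K := by
      rw [div_eq_iff (ne_of_gt hNhat)]
      linarith [h]
    rw [heq]
end

section
/- For the symmetric Gaussian TWRC with jointly Gaussian quantization Ŷ = Y_r + Ẑ (Ẑ ~ N(0, N̂) independent of Y_r), the optimal sum rates of CF and NNC coincide: for every α ∈ (0,1), max_{N̂>0} min{2αC(P/(N_r+N̂)), 2[(1-α)C(P_r/N) − αC(N_r/N̂)]} = 2αC(P/(N_r + N̂*)) where N̂* = (P+N_r)/((1+P_r/N)^{(1-α)/α} − 1), which is also the optimal quantization noise for the CF region constraint αC((P+N_r)/N̂) ≤ (1-α)C(P_r/N). -/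
theorem stmt_17 (P Pr Nr N : ℝ) (hP : 0 < P) (hPr : 0 < Pr) (hNr : 0 < Nr)
    (hN : 0 < N) :
    ∀ α ∈ Set.Ioo (0:ℝ) 1,
      ∀ Nstar : ℝ,
        Nstar = (P + Nr) / ((1 + Pr / N) ^ ((1 - α) / α) - 1) →
        -- NNC sum rate is maximized over N̂ > 0 at N̂* with value 2αC(P/(N_r+N̂*))
        IsGreatest
          {r : ℝ | ∃ Nhat : ℝ, 0 < Nhat ∧
            r = min (2 * α * Cap (P / (Nr + Nhat)))
                    (2 * ((1 - α) * Cap (Pr / N) - α * Cap (Nr / Nhat)))}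
          (2 * α * Cap (P / (Nr + Nstar)))
        ∧
        -- N̂* satisfies the CF downlink constraint
        α * Cap ((P + Nr) / Nstar) ≤ (1 - α) * Cap (Pr / N)
        ∧
        -- and is the smallest quantization noise variance doing so
        ∀ Nhat : ℝ, 0 < Nhat →
          α * Cap ((P + Nr) / Nhat) ≤ (1 - α) * Cap (Pr / N) →
          Nstar ≤ Nhat := by
  rintro α ⟨hα0, hα1⟩ Nstar hNs
  have hPrN : 0 < Pr / N := div_pos hPr hN
  have hb : (1:ℝ) < 1 + Pr / N := by linarith
  have hβ : 0 < (1 - α) / α := div_pos (by linarith) hα0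
  set K : ℝ := (1 + Pr / N) ^ ((1 - α) / α) with hKdef
  have hK1 : 1 < K := by
    rw [hKdef]
    exact Real.one_lt_rpow_iff_of_pos (by linarith) |>.mpr (Or.inl ⟨hb, hβ⟩)
  have hPNr : 0 < P + Nr := by linarith
  have hNspos : 0 < Nstar := by
    rw [hNs]; exact div_pos hPNr (by linarith)
  have hfrac : (P + Nr) / Nstar = K - 1 := by
    rw [hNs]
    field_simp
  have hKeq : K = 1 + (P + Nr) / Nstar := by rw [hfrac]; ring
  have hKlog : Real.log K = (1 - α) / α * Real.log (1 + Pr / N) :=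
    Real.log_rpow (by linarith) _
  have hαK : α * Real.log K = (1 - α) * Real.log (1 + Pr / N) := by
    rw [hKlog]; field_simp
  -- E1 : CF constraint holds with equality
  have E1 : α * Cap ((P + Nr) / Nstar) = (1 - α) * Cap (Pr / N) := by
    unfold Cap
    rw [← hKeq]
    linarith [hαK]
  -- log sum identity
  have hx : 0 < 1 + P / (Nr + Nstar) := by positivity
  have hy : 0 < 1 + Nr / Nstar := by positivity
  have hmul : (1 + P / (Nr + Nstar)) * (1 + Nr / Nstar) = K := by
    rw [hKeq]
    field_simp
    ring
  have hsum : Real.log K = Real.log (1 + P / (Nr + Nstar)) + Real.log (1 + Nr / Nstar) := by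
    rw [← hmul, Real.log_mul (ne_of_gt hx) (ne_of_gt hy)]
  have hsum' : α * Real.log K =
      α * Real.log (1 + P / (Nr + Nstar)) + α * Real.log (1 + Nr / Nstar) := by
    rw [hsum]; ring
  -- E2 : the two NNC rate functions coincide at Nstar
  have E2 : 2 * α * Cap (P / (Nr + Nstar))
      = 2 * ((1 - α) * Cap (Pr / N) - α * Cap (Nr / Nstar)) := by
    unfold Cap
    linarith [hαK, hsum']
  refine ⟨⟨⟨Nstar, hNspos, ?_⟩, ?_⟩, E1.le, ?_⟩
  · rw [← E2, min_self]
  · rintro r ⟨M, hM, rfl⟩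
    rcases le_total Nstar M with h | h
    · refine le_trans (min_le_left _ _) ?_
      have hfm : P / (Nr + M) ≤ P / (Nr + Nstar) := by
        apply div_le_div_of_nonneg_left hP.le (by linarith) (by linarith)
      have : Real.log (1 + P / (Nr + M)) ≤ Real.log (1 + P / (Nr + Nstar)) :=
        Real.log_le_log (by positivity) (by linarith)
      unfold Cap
      nlinarith
    · refine le_trans (min_le_right _ _) ?_
      rw [E2]
      have hgm : Nr / Nstar ≤ Nr / M :=
        div_le_div_of_nonneg_left hNr.le hM h
      have hlog : Real.log (1 + Nr / Nstar) ≤ Real.log (1 + Nr / M) :=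
        Real.log_le_log (by positivity) (by linarith)
      unfold Cap
      nlinarith
  · intro M hM hle
    rw [← E1] at hle
    have hcap : Cap ((P + Nr) / M) ≤ Cap ((P + Nr) / Nstar) :=
      le_of_mul_le_mul_left hle hα0
    unfold Cap at hcap
    have hlog : Real.log (1 + (P + Nr) / M) ≤ Real.log (1 + (P + Nr) / Nstar) := by
      linarith
    have h1 : 1 + (P + Nr) / M ≤ 1 + (P + Nr) / Nstar := by
      have hpos : 0 < 1 + (P + Nr) / M := by positivity
      exact (Real.log_le_log_iff hpos (by positivity)).mp hlog
    have h2 : (P + Nr) / M ≤ (P + Nr) / Nstar := by linarith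
    rw [div_le_div_iff₀ hM hNspos] at h2
    exact le_of_mul_le_mul_left h2 hPNr
end
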